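/- Let k, n, m be positive integers, a : {1,…,m}^k → ℝ coefficients with |a(1,…,1)| > 0, and Π(t, y₁,…,y_k) = 2^{−k} + Σ_{j₁,…,j_k=1}^{m} a(j₁,…,j_k) (Π_{r=1}^{k} cos(π n j_r y_r)) exp(−π² n² t Σ_{r=1}^{k} j_r²). Then exp(π² k n² t) · sup_{(y₁,…,y_k)∈[−1,1]^k} |Π(t, y₁,…,y_k) − 2^{−k}| → |a(1,…,1)| as t → ∞; i.e. the sup-norm deviation of Π from the uniform density 2^{−k} is asymptotically |a(1,…,1)| exp(−π² k n² t). -/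
import Mathlib


open Real Filter

/-- The explicit solution of the `k`-dimensional heat equation on the cube `[-1,1]^k`
with Neumann boundary conditions and `n`-periodic trigonometric-polynomial initial
data. -/
noncomputable def heatSolK (k n m : ℕ) (a : (Fin k → ℕ) → ℝ) (t : ℝ) (y : Fin k → ℝ) : ℝ :=
  1 / 2 ^ k + ∑ j ∈ Fintype.piFinset (fun _ : Fin k => Finset.Icc 1 m),
    a j * (∏ r : Fin k, Real.cos (Real.pi * n * j r * y r)) *
      Real.exp (-(Real.pi ^ 2) * n ^ 2 * t * ∑ r : Fin k, (j r : ℝ) ^ 2)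

private lemma tendsto_aux {ι : Type*} [DecidableEq ι] (s : Finset ι) (b : ι → ℝ) (d : ι → ℝ)
    (j0 : ι) (hj0 : j0 ∈ s) (hd0 : d j0 = 0) (hd : ∀ j ∈ s, j ≠ j0 → 0 < d j) :
    Tendsto (fun t : ℝ => ∑ j ∈ s, b j * Real.exp (-(d j) * t)) atTop (nhds (b j0)) := by
  have h : Tendsto (fun t : ℝ => ∑ j ∈ s, b j * Real.exp (-(d j) * t)) atTop
      (nhds (∑ j ∈ s, if j = j0 then b j else 0)) := by
    apply tendsto_finset_sum
    intro j hj
    by_cases hcase : j = j0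
    · subst hcase
      simp only [if_pos rfl, hd0, neg_zero, zero_mul, Real.exp_zero, mul_one]
      exact tendsto_const_nhds
    · simp only [if_neg hcase]
      have hdj : 0 < d j := hd j hj hcase
      have h1 : Tendsto (fun t : ℝ => d j * t) atTop atTop :=
        Tendsto.const_mul_atTop hdj tendsto_id
      have h2 : Tendsto (fun t : ℝ => -(d j * t)) atTop atBot :=
        tendsto_neg_atTop_atBot.comp h1
      have h3 : Tendsto (fun t : ℝ => Real.exp (-(d j) * t)) atTop (nhds 0) := by
        simp only [neg_mul]
        exact Real.tendsto_exp_atBot.comp h2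
      simpa using h3.const_mul (b j)
  simpa [Finset.sum_ite_eq' s j0 b, hj0] using h

/-- If `|a(1,…,1)| > 0`, then
`exp (π² k n² t) · sup_{y ∈ [-1,1]^k} |Π(t,y) - 2⁻ᵏ| → |a(1,…,1)|` as `t → ∞`, i.e. the
sup-norm deviation of `Π` from the uniform density `2⁻ᵏ` is asymptotically
`|a(1,…,1)| exp (-π² k n² t)`. -/
theorem heatSolK_asymptotics (k n m : ℕ) (hk : 0 < k) (hn : 0 < n) (hm : 0 < m)
    (a : (Fin k → ℕ) → ℝ) (ha : 0 < |a (fun _ => 1)|) :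
    Tendsto
      (fun t : ℝ =>
        Real.exp (Real.pi ^ 2 * k * n ^ 2 * t) *
          sSup ((fun y => |heatSolK k n m a t y - 1 / 2 ^ k|) ''
            Set.Icc (fun _ : Fin k => (-1 : ℝ)) (fun _ : Fin k => 1)))
      atTop (nhds |a (fun _ => 1)|) := by
  set J := Fintype.piFinset (fun _ : Fin k => Finset.Icc 1 m) with hJ
  set c : ℝ := Real.pi ^ 2 * n ^ 2 with hc
  have hcpos : 0 < c := by
    have := Real.pi_pos
    have : (0:ℝ) < (n:ℝ) := by exact_mod_cast hn
    positivity
  set d : (Fin k → ℕ) → ℝ := fun j => c * ((∑ r : Fin k, (j r : ℝ) ^ 2) - k) with hdDef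
  set ones : (Fin k → ℕ) := fun _ => 1 with honesDef
  have honesJ : ones ∈ J := by
    rw [hJ, Fintype.mem_piFinset]
    intro r
    simp only [honesDef, Finset.mem_Icc]
    omega
  have hd0 : d ones = 0 := by
    simp [hdDef, honesDef]
  have hdpos : ∀ j ∈ J, j ≠ ones → 0 < d j := by
    intro j hj hne
    have hmem : ∀ r, 1 ≤ j r := by
      intro r
      have := Fintype.mem_piFinset.mp hj r
      exact (Finset.mem_Icc.mp this).1
    obtain ⟨r0, hr0⟩ : ∃ r, j r ≠ 1 := by
      by_contra hcon
      push_neg at hcon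
      exact hne (funext hcon)
    have hsum : (k : ℝ) < ∑ r : Fin k, (j r : ℝ) ^ 2 := by
      have hk' : (k : ℝ) = ∑ _r : Fin k, (1 : ℝ) := by simp
      rw [hk']
      apply Finset.sum_lt_sum
      · intro r _
        have h1 : (1:ℝ) ≤ (j r : ℝ) := by exact_mod_cast hmem r
        nlinarith
      · refine ⟨r0, Finset.mem_univ _, ?_⟩
        have h2 : 2 ≤ j r0 := by
          have := hmem r0
          omega
        have h2' : (2:ℝ) ≤ (j r0 : ℝ) := by exact_mod_cast h2
        nlinarith
    have : 0 < (∑ r : Fin k, (j r : ℝ) ^ 2) - k := by linarith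
    exact mul_pos hcpos this
  -- key exponential identity
  have hexp : ∀ (j : Fin k → ℕ) (t : ℝ),
      Real.exp (Real.pi ^ 2 * k * n ^ 2 * t) *
        Real.exp (-(Real.pi ^ 2) * n ^ 2 * t * ∑ r : Fin k, (j r : ℝ) ^ 2)
      = Real.exp (-(d j) * t) := by
    intro j t
    rw [← Real.exp_add]
    congr 1
    simp only [hdDef, hc]
    ring
  -- uniform bound for elements of the image
  have habs : ∀ (t : ℝ) (y : Fin k → ℝ),
      |heatSolK k n m a t y - 1 / 2 ^ k| ≤
      ∑ j ∈ J, |a j| * Real.exp (-(Real.pi ^ 2) * n ^ 2 * t * ∑ r : Fin k, (j r : ℝ) ^ 2) := by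
    intro t y
    unfold heatSolK
    rw [add_sub_cancel_left]
    refine (Finset.abs_sum_le_sum_abs _ _).trans (Finset.sum_le_sum ?_)
    intro j hj
    rw [abs_mul, abs_mul, Real.abs_exp]
    have hP : |∏ r : Fin k, Real.cos (Real.pi * n * j r * y r)| ≤ 1 := by
      rw [Finset.abs_prod]
      apply Finset.prod_le_one
      · intro r _; exact abs_nonneg _
      · intro r _; exact Real.abs_cos_le_one _
    have := mul_le_mul_of_nonneg_right
      (mul_le_mul_of_nonneg_left hP (abs_nonneg (a j)))
      (Real.exp_pos (-(Real.pi ^ 2) * n ^ 2 * t * ∑ r : Fin k, (j r : ℝ) ^ 2)).le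
    simpa using this
  -- value at y = 0
  have hzero : ∀ t : ℝ, heatSolK k n m a t (fun _ => 0) - 1 / 2 ^ k
      = ∑ j ∈ J, a j * Real.exp (-(Real.pi ^ 2) * n ^ 2 * t * ∑ r : Fin k, (j r : ℝ) ^ 2) := by
    intro t
    unfold heatSolK
    rw [add_sub_cancel_left]
    apply Finset.sum_congr rfl
    intro j _
    simp
  have h0mem : (fun _ : Fin k => (0:ℝ)) ∈
      Set.Icc (fun _ : Fin k => (-1 : ℝ)) (fun _ : Fin k => 1) := by
    constructor <;> · intro i; norm_num
  -- squeeze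
  have hlow : Tendsto (fun t : ℝ => |∑ j ∈ J, a j * Real.exp (-(d j) * t)|) atTop
      (nhds |a ones|) :=
    (tendsto_aux J a d ones honesJ hd0 hdpos).abs
  have hupp : Tendsto (fun t : ℝ => ∑ j ∈ J, |a j| * Real.exp (-(d j) * t)) atTop
      (nhds |a ones|) :=
    tendsto_aux J (fun j => |a j|) d ones honesJ hd0 hdpos
  have key : ∀ t : ℝ,
      |∑ j ∈ J, a j * Real.exp (-(d j) * t)| ≤
        Real.exp (Real.pi ^ 2 * k * n ^ 2 * t) *
          sSup ((fun y => |heatSolK k n m a t y - 1 / 2 ^ k|) ''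
            Set.Icc (fun _ : Fin k => (-1 : ℝ)) (fun _ : Fin k => 1)) ∧
      Real.exp (Real.pi ^ 2 * k * n ^ 2 * t) *
          sSup ((fun y => |heatSolK k n m a t y - 1 / 2 ^ k|) ''
            Set.Icc (fun _ : Fin k => (-1 : ℝ)) (fun _ : Fin k => 1)) ≤
        ∑ j ∈ J, |a j| * Real.exp (-(d j) * t) := by
    intro t
    set S := (fun y => |heatSolK k n m a t y - 1 / 2 ^ k|) ''
        Set.Icc (fun _ : Fin k => (-1 : ℝ)) (fun _ : Fin k => 1) with hS
    set M : ℝ := ∑ j ∈ J, |a j| *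
        Real.exp (-(Real.pi ^ 2) * n ^ 2 * t * ∑ r : Fin k, (j r : ℝ) ^ 2) with hM
    have hne : S.Nonempty := ⟨_, ⟨_, h0mem, rfl⟩⟩
    have hbdd : BddAbove S := by
      refine ⟨M, ?_⟩
      rintro x ⟨y, hy, rfl⟩
      exact habs t y
    have hsupM : sSup S ≤ M := csSup_le hne (by rintro x ⟨y, hy, rfl⟩; exact habs t y)
    have hmemS : |heatSolK k n m a t (fun _ => 0) - 1 / 2 ^ k| ∈ S := ⟨_, h0mem, rfl⟩
    have hlesup : |heatSolK k n m a t (fun _ => 0) - 1 / 2 ^ k| ≤ sSup S :=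
      le_csSup hbdd hmemS
    have hEpos := Real.exp_pos (Real.pi ^ 2 * k * n ^ 2 * t)
    constructor
    · have heq : |∑ j ∈ J, a j * Real.exp (-(d j) * t)| =
          Real.exp (Real.pi ^ 2 * k * n ^ 2 * t) *
            |heatSolK k n m a t (fun _ => 0) - 1 / 2 ^ k| := by
        rw [hzero, ← abs_of_pos hEpos, ← abs_mul, Finset.mul_sum]
        congr 1
        apply Finset.sum_congr rfl
        intro j _
        rw [← hexp j t]
        ring
      rw [heq]
      exact mul_le_mul_of_nonneg_left hlesup hEpos.le
    · have heq2 : Real.exp (Real.pi ^ 2 * k * n ^ 2 * t) * M =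
          ∑ j ∈ J, |a j| * Real.exp (-(d j) * t) := by
        rw [hM, Finset.mul_sum]
        apply Finset.sum_congr rfl
        intro j _
        rw [← hexp j t]
        ring
      calc Real.exp (Real.pi ^ 2 * k * n ^ 2 * t) * sSup S
          ≤ Real.exp (Real.pi ^ 2 * k * n ^ 2 * t) * M :=
            mul_le_mul_of_nonneg_left hsupM hEpos.le
        _ = ∑ j ∈ J, |a j| * Real.exp (-(d j) * t) := heq2
  have ha_ones : |a ones| = |a (fun _ => 1)| := rfl
  rw [← ha_ones]
  exact tendsto_of_tendsto_of_tendsto_of_le_of_le hlow hupp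
    (fun t => (key t).1) (fun t => (key t).2)
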